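/- Let p ≥ 0 be real, λ > 0 real, γ, σ complex, a complex that is not a nonpositive integer, and ϑ, υ complex with Re(υ) > Re(ϑ) > 0. Then for all complex z with |z| < 1, the first derivative with respect to z satisfies d/dz [Φ_{γ,ϑ;υ}(z,σ,a;p,λ)] = (γϑ/υ) · Φ_{γ+1,ϑ+1;υ+1}(z,σ,a+1;p,λ). -/

import Mathlib

open MeasureTheory Set Filter

/-- Mittag-Leffler function `E_λ(z) = ∑ z^n / Γ(λ n + 1)`. -/
noncomputable def mittagLeffler (lam : ℝ) (z : ℂ) : ℂ :=
  ∑' n : ℕ, z ^ n / (Real.Gamma (lam * n + 1) : ℂ)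

/-- Extended beta function `B(x,y;p,λ)`. -/
noncomputable def extBeta (x y : ℂ) (p lam : ℝ) : ℂ :=
  ∫ t in (0:ℝ)..1, (t : ℂ) ^ (x - 1) * ((1 : ℂ) - (t : ℂ)) ^ (y - 1) *
    mittagLeffler lam (-(p : ℂ) / ((t : ℂ) * (1 - (t : ℂ))))

/-- Classical beta function `B(x,y) = B(x,y;0,1)`. -/
noncomputable def classicalBeta (x y : ℂ) : ℂ := extBeta x y 0 1

/-- Pochhammer symbol `(x)_n = x (x+1) ⋯ (x+n-1)`. -/
noncomputable def poch (x : ℂ) (n : ℕ) : ℂ := (ascPochhammer ℂ n).eval x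

/-- Extended Hurwitz–Lerch zeta function `Φ_{γ,ϑ;υ}(z,σ,a;p,λ)`. -/
noncomputable def extHLZeta (γ ϑ υ z σ a : ℂ) (p lam : ℝ) : ℂ :=
  ∑' n : ℕ, poch γ n * extBeta (ϑ + n) (υ - ϑ) p lam /
    (classicalBeta ϑ (υ - ϑ) * (n.factorial : ℂ)) * z ^ n / ((n : ℂ) + a) ^ σ

/-- Extended Gauss hypergeometric function `F_p^λ(γ,ϑ;υ;z)`. -/
noncomputable def extHyper (γ ϑ υ : ℂ) (p lam : ℝ) (z : ℂ) : ℂ :=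
  ∑' n : ℕ, poch γ n * extBeta (ϑ + n) (υ - ϑ) p lam /
    classicalBeta ϑ (υ - ϑ) * z ^ n / (n.factorial : ℂ)

/-- Goyal–Laddha Hurwitz–Lerch zeta function `Φ*_γ(z,σ,a)`. -/
noncomputable def goyalLaddha (γ z σ a : ℂ) : ℂ :=
  ∑' n : ℕ, poch γ n / (n.factorial : ℂ) * z ^ n / ((n : ℂ) + a) ^ σ

/-- Limiting case `Φ*_{ϑ;υ}(z,σ,a;p,λ)`. -/
noncomputable def limitHLZeta (ϑ υ z σ a : ℂ) (p lam : ℝ) : ℂ :=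
  ∑' n : ℕ, extBeta (ϑ + n) (υ - ϑ) p lam /
    (classicalBeta ϑ (υ - ϑ) * (n.factorial : ℂ)) * z ^ n / ((n : ℂ) + a) ^ σ

/-- Garg Hurwitz–Lerch zeta function `Φ_{γ,ϑ;υ}(z,σ,a)`. -/
noncomputable def gargZeta (γ ϑ υ z σ a : ℂ) : ℂ :=
  ∑' n : ℕ, poch γ n * poch ϑ n / (poch υ n * (n.factorial : ℂ)) *
    z ^ n / ((n : ℂ) + a) ^ σ

/-! Write `Φ(z) = ∑ cₙ zⁿ`. The coefficients grow at most polynomially in `n`: `(γ)ₙ / n!` does,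
`B(ϑ + n, υ - ϑ; p, λ)` stays bounded because its integrand decreases in `n` on `(0, 1]`, and
`(n + a)^(-σ) = O(n^(-Re σ))`. Hence the series can be differentiated termwise in the unit disc, and the
derivative has coefficients `(n + 1) cₙ₊₁`. The identities `(γ)ₙ₊₁ = γ (γ + 1)ₙ` and
`B(ϑ + 1, υ - ϑ) = (ϑ / υ) B(ϑ, υ - ϑ)` identify these with `γϑ/υ` times the coefficients of
`Φ_{γ+1,ϑ+1;υ+1}(z, σ, a + 1; p, λ)`. -/

open Asymptotics

def HasPolynomialGrowth {E : Type*} [Norm E] (c : ℕ → E) : Prop :=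
  ∃ k : ℕ, c =O[atTop] fun n => (n : ℝ) ^ k

namespace HasPolynomialGrowth

variable {𝕜 : Type*} [RCLike 𝕜] {c d : ℕ → 𝕜}

lemma of_isBigO_one (hc : c =O[atTop] fun _ => (1 : ℝ)) : HasPolynomialGrowth c :=
  ⟨0, by simpa using hc⟩

lemma mul (hc : HasPolynomialGrowth c) (hd : HasPolynomialGrowth d) :
    HasPolynomialGrowth fun n => c n * d n := by
  obtain ⟨k, hk⟩ := hc
  obtain ⟨l, hl⟩ := hd
  exact ⟨k + l, by simpa only [pow_add] using hk.mul hl⟩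

lemma const_mul (hc : HasPolynomialGrowth c) (b : 𝕜) : HasPolynomialGrowth fun n => b * c n :=
  hc.imp fun _ hk => hk.const_mul_left b

lemma natCast_mul (hc : HasPolynomialGrowth c) : HasPolynomialGrowth fun n => (n : 𝕜) * c n :=
  (show HasPolynomialGrowth fun n => (n : 𝕜) from
    ⟨1, by simpa using (isBigO_refl (fun n : ℕ => (n : 𝕜)) atTop).norm_right⟩).mul hc

lemma summable_norm_mul_pow (hc : HasPolynomialGrowth c) {z : 𝕜} (hz : ‖z‖ < 1) :
    Summable fun n => ‖c n * z ^ n‖ := by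
  obtain ⟨k, hk⟩ := hc
  refine summable_norm_mul_geometric_of_norm_lt_one' hz (k := k) ?_
  exact hk.trans (isBigO_norm_right.mp (by simp [isBigO_refl]))

theorem hasDerivAt_tsum_mul_pow (hc : HasPolynomialGrowth c) {z : 𝕜} (hz : ‖z‖ < 1) :
    HasDerivAt (fun w => ∑' n, c n * w ^ n) (∑' n : ℕ, ((n : 𝕜) + 1) * c (n + 1) * z ^ n) z := by
  obtain ⟨r, hzr, hr1⟩ := exists_between hz
  have hr0 : 0 < r := (norm_nonneg z).trans_lt hzr
  have hr1' : ‖(r : 𝕜)‖ < 1 := by simpa [abs_of_pos hr0] using hr1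
  -- bounds `‖c n‖ n rⁿ⁻¹`, since `n rⁿ⁻¹ = n rⁿ / r` also for `n = 0`
  set u : ℕ → ℝ := fun n => ‖(n : 𝕜) * c n * (r : 𝕜) ^ n‖ / r
  have hu : Summable u := (hc.natCast_mul.summable_norm_mul_pow hr1').div_const r
  have hbound : ∀ n, ∀ w ∈ Metric.ball (0 : 𝕜) r, ‖c n * ((n : 𝕜) * w ^ (n - 1))‖ ≤ u n := by
    rintro (_ | n) w hw
    · simp [u]
    · rw [mem_ball_zero_iff] at hw
      have : ‖w‖ ^ n ≤ r ^ n := pow_le_pow_left₀ (norm_nonneg w) hw.le n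
      simp only [u, norm_mul, norm_pow, RCLike.norm_ofReal, abs_of_pos hr0, Nat.add_sub_cancel]
      rw [pow_succ, mul_div_assoc, mul_div_cancel_right₀ _ hr0.ne']
      calc ‖c (n + 1)‖ * (‖((n + 1 : ℕ) : 𝕜)‖ * ‖w‖ ^ n)
          ≤ ‖c (n + 1)‖ * (‖((n + 1 : ℕ) : 𝕜)‖ * r ^ n) := by gcongr
        _ = _ := by ring
  have hderiv := hasDerivAt_tsum_of_isPreconnected hu Metric.isOpen_ball
    (convex_ball (0 : 𝕜) r).isPreconnected (fun n w _ => (hasDerivAt_pow n w).const_mul (c n))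
    hbound (Metric.mem_ball_self hr0) (summable_of_ne_finset_zero (s := {0}) (by simp_all))
    (mem_ball_zero_iff.mpr hzr)
  have hsum : Summable fun n => c n * ((n : 𝕜) * z ^ (n - 1)) :=
    .of_norm_bounded hu fun n => hbound n z (mem_ball_zero_iff.mpr hzr)
  rw [hsum.tsum_eq_zero_add] at hderiv
  simpa [mul_comm, mul_left_comm, mul_assoc] using hderiv

end HasPolynomialGrowth

lemma poch_succ (γ : ℂ) (n : ℕ) : poch γ (n + 1) = γ * poch (γ + 1) n := by
  simp [poch, ascPochhammer_succ_left, Polynomial.eval_comp]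

lemma succ_pow_mul_add_le (m n : ℕ) : (n + 1) ^ m * (m + n) ≤ (n + 1) * (n + 2) ^ m := by
  induction m with
  | zero => simp
  | succ m ih =>
    have hpow : (n + 1) ^ m ≤ (n + 2) ^ m := Nat.pow_le_pow_left (by omega) m
    calc (n + 1) ^ (m + 1) * (m + 1 + n)
        = (n + 1) * ((n + 1) ^ m * (m + n)) + (n + 1) * (n + 1) ^ m := by ring
      _ ≤ (n + 1) * ((n + 1) * (n + 2) ^ m) + (n + 1) * (n + 2) ^ m := by gcongr
      _ = (n + 1) * (n + 2) ^ (m + 1) := by ring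

lemma norm_poch_le {γ : ℂ} {m : ℕ} (hγ : ‖γ‖ ≤ m) (n : ℕ) :
    ‖poch γ n‖ ≤ n.factorial * ((n : ℝ) + 1) ^ m := by
  induction n with
  | zero => simp [poch]
  | succ n ih =>
    have hγn : ‖γ + n‖ ≤ m + n := (norm_add_le _ _).trans (by simpa using hγ)
    have hstep : ((n : ℝ) + 1) ^ m * (m + n) ≤ (n + 1) * (n + 2) ^ m := by
      exact_mod_cast succ_pow_mul_add_le m n
    calc ‖poch γ (n + 1)‖ = ‖poch γ n‖ * ‖γ + n‖ := by
          rw [poch, ascPochhammer_succ_eval, norm_mul, poch]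
      _ ≤ n.factorial * ((n : ℝ) + 1) ^ m * (m + n) := by gcongr
      _ ≤ n.factorial * ((n + 1) * (n + 2) ^ m) := by
          rw [mul_assoc]; exact mul_le_mul_of_nonneg_left hstep (by positivity)
      _ = (n + 1).factorial * (((n + 1 : ℕ) : ℝ) + 1) ^ m := by
          push_cast [Nat.factorial_succ]; ring

lemma hasPolynomialGrowth_poch_div_factorial (γ : ℂ) :
    HasPolynomialGrowth fun n => poch γ n / n.factorial := by
  set m := ⌈‖γ‖⌉₊
  refine ⟨m, IsBigO.of_bound (2 ^ m) ?_⟩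
  filter_upwards [eventually_ge_atTop 1] with n hn
  have hn' : (1 : ℝ) ≤ n := by exact_mod_cast hn
  rw [norm_div, Complex.norm_natCast, div_le_iff₀ (by positivity), norm_pow, Real.norm_natCast]
  calc ‖poch γ n‖ ≤ n.factorial * ((n : ℝ) + 1) ^ m := norm_poch_le (Nat.le_ceil _) n
    _ ≤ n.factorial * (2 * n) ^ m := by gcongr; linarith
    _ = 2 ^ m * n ^ m * n.factorial := by ring

lemma isTheta_norm_natCast_add (a : ℂ) :
    (fun n : ℕ => ‖(n : ℂ) + a‖) =Θ[atTop] fun n => (n : ℝ) := by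
  have hlin : (fun _ : ℕ => a) =o[atTop] fun n => (n : ℂ) :=
    isLittleO_const_left.mpr <| .inr <| by
      simpa [Function.comp_def] using tendsto_natCast_atTop_atTop (R := ℝ)
  have hequiv : (fun n : ℕ => (n : ℂ) + a) ~[atTop] fun n => (n : ℂ) := by
    simpa only [Pi.add_def, add_comm] using
      hlin.add_isEquivalent (IsEquivalent.refl (u := fun n : ℕ => (n : ℂ)))
  refine isTheta_norm_left.mpr (hequiv.isTheta.trans ?_)
  exact IsTheta.of_norm_eventuallyEq (.of_forall fun n => by simp)

lemma hasPolynomialGrowth_natCast_add_cpow (a s : ℂ) :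
    HasPolynomialGrowth fun n : ℕ => ((n : ℂ) + a) ^ s := by
  refine ⟨⌈s.re⌉₊, ?_⟩
  calc (fun n : ℕ => ((n : ℂ) + a) ^ s)
      =O[atTop] fun n => ‖(n : ℂ) + a‖ ^ s.re := Complex.isBigO_cpow_rpow isBoundedUnder_const
    _ =Θ[atTop] fun n => (n : ℝ) ^ s.re :=
      (isTheta_norm_natCast_add a).rpow (.of_forall fun _ => norm_nonneg _)
        (.of_forall fun _ => Nat.cast_nonneg _)
    _ =O[atTop] fun n => (n : ℝ) ^ ⌈s.re⌉₊ := by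
      refine IsBigO.of_bound 1 ?_
      filter_upwards [eventually_ge_atTop 1] with n hn
      have hn' : (1 : ℝ) ≤ n := by exact_mod_cast hn
      rw [one_mul, Real.norm_of_nonneg (by positivity), Real.norm_of_nonneg (by positivity),
        ← Real.rpow_natCast]
      exact Real.rpow_le_rpow_of_exponent_le hn' (Nat.le_ceil _)

theorem isBigO_one_intervalIntegral_of_antitone {E : Type*} [NormedAddCommGroup E]
    [NormedSpace ℝ E] {F : ℕ → ℝ → E} {a b : ℝ} {μ : Measure ℝ}
    (hF : ∀ t ∈ uIoc a b, Antitone fun n => ‖F n t‖) :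
    (fun n => ∫ t in a..b, F n t ∂μ) =O[atTop] fun _ => (1 : ℝ) := by
  by_cases hint : ∃ N, IntervalIntegrable (F N) μ a b
  · obtain ⟨N, hN⟩ := hint
    refine IsBigO.of_bound |∫ t in a..b, ‖F N t‖ ∂μ| ?_
    filter_upwards [eventually_ge_atTop N] with n hn
    rw [norm_one, mul_one]
    exact intervalIntegral.norm_integral_le_abs_of_norm_le
      (ae_restrict_of_forall_mem measurableSet_uIoc fun t ht => hF t ht hn) hN.norm
  · -- otherwise every integral takes the junk value `0`
    simp only [not_exists] at hint
    simp only [intervalIntegral.integral_undef (hint _)]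
    exact isBigO_zero _ _

lemma extBeta_natCast_add_isBigO_one (x y : ℂ) (p lam : ℝ) :
    (fun n : ℕ => extBeta (x + n) y p lam) =O[atTop] fun _ => (1 : ℝ) := by
  refine isBigO_one_intervalIntegral_of_antitone fun t ht => antitone_nat_of_succ_le fun n => ?_
  rw [uIoc_of_le zero_le_one] at ht
  have ht0 : (t : ℂ) ≠ 0 := by exact_mod_cast ht.1.ne'
  have hpow : (t : ℂ) ^ (x + ↑(n + 1) - 1) = (t : ℂ) ^ (x + n - 1) * t := by
    rw [show x + ↑(n + 1) - 1 = (x + n - 1) + 1 by push_cast; ring,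
      Complex.cpow_add _ _ ht0, Complex.cpow_one]
  have ht1 : ‖(t : ℂ)‖ ≤ 1 := by simpa [abs_of_pos ht.1] using ht.2
  simp only [hpow, norm_mul]
  calc _ = ‖(t : ℂ) ^ (x + n - 1)‖ * ‖(1 - (t : ℂ)) ^ (y - 1)‖ *
        ‖mittagLeffler lam (-p / (t * (1 - t)))‖ * ‖(t : ℂ)‖ := by ring
    _ ≤ _ := mul_le_of_le_one_right (by positivity) ht1

lemma mittagLeffler_zero (lam : ℝ) : mittagLeffler lam 0 = 1 := by
  rw [mittagLeffler, tsum_eq_single 0 fun n hn => by simp [zero_pow hn]]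
  simp

lemma classicalBeta_eq_betaIntegral (x y : ℂ) : classicalBeta x y = Complex.betaIntegral x y := by
  simp [classicalBeta, extBeta, Complex.betaIntegral, mittagLeffler_zero]

lemma classicalBeta_add_one_left {x y : ℂ} (hx : 0 < x.re) (hy : 0 < y.re) :
    classicalBeta (x + 1) y = x / (x + y) * classicalBeta x y := by
  have hxy : 0 < (x + y).re := by rw [Complex.add_re]; positivity
  have hxy0 : x + y ≠ 0 := fun h => by simp [h] at hxy
  have hΓ : Complex.Gamma (x + y) ≠ 0 := Complex.Gamma_ne_zero_of_re_pos hxy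
  have h1 := Complex.Gamma_mul_Gamma_eq_betaIntegral (s := x + 1) (t := y)
    (by rw [Complex.add_re, Complex.one_re]; linarith) hy
  have h0 := Complex.Gamma_mul_Gamma_eq_betaIntegral hx hy
  rw [show x + 1 + y = (x + y) + 1 by ring, Complex.Gamma_add_one _ hxy0,
    Complex.Gamma_add_one _ (fun h => by simp [h] at hx)] at h1
  rw [mul_assoc, h0] at h1
  rw [classicalBeta_eq_betaIntegral, classicalBeta_eq_betaIntegral]
  apply mul_left_cancel₀ (mul_ne_zero hxy0 hΓ)
  rw [← h1]
  field_simp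

noncomputable def extHLZetaCoeff (γ ϑ υ σ a : ℂ) (p lam : ℝ) (n : ℕ) : ℂ :=
  poch γ n * extBeta (ϑ + n) (υ - ϑ) p lam /
    (classicalBeta ϑ (υ - ϑ) * (n.factorial : ℂ)) / ((n : ℂ) + a) ^ σ

lemma extHLZeta_eq_tsum (γ ϑ υ z σ a : ℂ) (p lam : ℝ) :
    extHLZeta γ ϑ υ z σ a p lam = ∑' n, extHLZetaCoeff γ ϑ υ σ a p lam n * z ^ n :=
  tsum_congr fun n => by simp only [extHLZetaCoeff]; ring

lemma hasPolynomialGrowth_extHLZetaCoeff (γ ϑ υ σ a : ℂ) (p lam : ℝ) :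
    HasPolynomialGrowth (extHLZetaCoeff γ ϑ υ σ a p lam) := by
  have hcoeff : extHLZetaCoeff γ ϑ υ σ a p lam = fun n => (classicalBeta ϑ (υ - ϑ))⁻¹ *
      (poch γ n / n.factorial * extBeta (ϑ + n) (υ - ϑ) p lam * ((n : ℂ) + a) ^ (-σ)) := by
    funext n
    simp only [extHLZetaCoeff, Complex.cpow_neg]
    ring
  rw [hcoeff]
  exact (((hasPolynomialGrowth_poch_div_factorial γ).mul
    (.of_isBigO_one (extBeta_natCast_add_isBigO_one ϑ (υ - ϑ) p lam))).mul
    (hasPolynomialGrowth_natCast_add_cpow a (-σ))).const_mul _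

lemma succ_mul_extHLZetaCoeff_succ {γ ϑ υ σ a : ℂ} {p lam : ℝ} (hϑ : 0 < ϑ.re)
    (hυϑ : ϑ.re < υ.re) (n : ℕ) :
    ((n : ℂ) + 1) * extHLZetaCoeff γ ϑ υ σ a p lam (n + 1) =
      γ * ϑ / υ * extHLZetaCoeff (γ + 1) (ϑ + 1) (υ + 1) σ (a + 1) p lam n := by
  have hϑ0 : ϑ ≠ 0 := fun h => by simp [h] at hϑ
  have hυ0 : υ ≠ 0 := fun h => by rw [h, Complex.zero_re] at hυϑ; linarith
  have hB := classicalBeta_add_one_left hϑ (show 0 < (υ - ϑ).re by rw [Complex.sub_re]; linarith)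
  rw [add_sub_cancel] at hB
  simp only [extHLZetaCoeff, poch_succ, Nat.factorial_succ, add_sub_add_right_eq_sub, hB]
  rw [show ϑ + 1 + n = ϑ + ↑(n + 1) by push_cast; ring,
    show (n : ℂ) + (a + 1) = ↑(n + 1) + a by push_cast; ring]
  push_cast
  field_simp

theorem extHLZeta_deriv_general (p lam : ℝ) (γ σ a ϑ υ : ℂ)
    (hϑ : 0 < ϑ.re) (hυϑ : ϑ.re < υ.re) :
    ∀ z : ℂ, ‖z‖ < 1 →
      deriv (fun w => extHLZeta γ ϑ υ w σ a p lam) z =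
        γ * ϑ / υ * extHLZeta (γ + 1) (ϑ + 1) (υ + 1) z σ (a + 1) p lam := by
  intro z hz
  simp only [extHLZeta_eq_tsum]
  rw [((hasPolynomialGrowth_extHLZetaCoeff γ ϑ υ σ a p lam).hasDerivAt_tsum_mul_pow hz).deriv]
  simp only [succ_mul_extHLZetaCoeff_succ hϑ hυϑ, mul_assoc, tsum_mul_left]

/-- first derivative formula for the extended Hurwitz–Lerch
zeta function. -/
theorem extHLZeta_deriv (p lam : ℝ) (γ σ a ϑ υ : ℂ)
    (hp : 0 ≤ p) (hlam : 0 < lam) (ha : ∀ m : ℕ, a ≠ -(m : ℂ))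
    (hϑ : 0 < ϑ.re) (hυϑ : ϑ.re < υ.re) :
    ∀ z : ℂ, ‖z‖ < 1 →
      deriv (fun w => extHLZeta γ ϑ υ w σ a p lam) z =
        γ * ϑ / υ * extHLZeta (γ + 1) (ϑ + 1) (υ + 1) z σ (a + 1) p lam :=
  extHLZeta_deriv_general p lam γ σ a ϑ υ hϑ hυϑ
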